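/- arXiv:1711.07848 — 3 statements merged into one kernel-verified Lean document; each statement's English description precedes it below -/
import Mathlib

section
/- Every nonzero amplitude of an n-qubit stabilizer state, normalized so that the first nonzero computational-basis amplitude is 1, lies in {±1, ±i}; equivalently, stabilizer states are unbiased: all nonzero amplitudes have equal modulus 1/√|s| where |s| is the support size. -/
open scoped BigOperators

noncomputable section

/-- The state space of `n` qubits, as complex functions on bitstrings. -/
abbrev QState (n : ℕ) : Type := (Fin n → ZMod 2) → ℂ

/-- Hermitian inner product `⟨ψ|φ⟩` (conjugate-linear in the first argument). -/
def qInner {n : ℕ} (ψ φ : QState n) : ℂ := ∑ b, (starRingEnd ℂ) (ψ b) * φ b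

/-- The Pauli operator `i^k · X(x) Z(z)` on `n` qubits. -/
def pauliFun (n : ℕ) (k : ZMod 4) (x z : Fin n → ZMod 2) : QState n → QState n :=
  fun ψ b => Complex.I ^ k.val * (-1 : ℂ) ^ (∑ i, (z i * (b i + x i)).val) * ψ (b + x)

/-- The `n`-qubit Pauli group, as a set of operators. -/
def PauliGroup (n : ℕ) : Set (QState n → QState n) :=
  {U | ∃ k x z, U = pauliFun n k x z}

/-- The stabilizer group of a state: Pauli operators fixing it. -/
def stabGroup (n : ℕ) (ψ : QState n) : Set (QState n → QState n) :=
  {U | U ∈ PauliGroup n ∧ U ψ = ψ}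

/-- An `n`-qubit stabilizer state: a unit vector with `2^n` stabilizers. -/
def IsStabilizerState (n : ℕ) (ψ : QState n) : Prop :=
  qInner ψ ψ = 1 ∧ (stabGroup n ψ).ncard = 2 ^ n

/-- Two states are parallel (equal up to a global phase/scalar). -/
def Parallel {n : ℕ} (ψ φ : QState n) : Prop := ∃ c : ℂ, φ = c • ψ

/-! A Pauli operator `i^k X(x) Z(z)` fixing `ψ` relates the amplitudes at `b` and `b + x` by a
fourth root of unity, so it suffices to find, for any two points `b, b'` of the support, a
stabilizer with `X`-part `b + b'`. Let `L` be the span of all such sums `b + b'`. The `X`-parts of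
stabilizers lie in `L`; a stabilizer with trivial `X`-part is determined by its `Z`-part, which is
orthogonal to `L`; and multiplying by one stabilizer maps each fibre of the `X`-part map injectively
into the stabilizers with trivial `X`-part. Hence `2^n ≤ |L^⊥| · #{X-parts}`, and since
`|L| · |L^⊥| = 2^n` the `X`-parts exhaust `L`. All nonzero amplitudes then have equal modulus, which
normalization pins down to `1/√|s|`. -/

open Matrix

section RootOfUnityPowers

variable {M : Type*} [Monoid M] {N : ℕ} {u : M}

theorem pow_zmod_val_natCast (hu : u ^ N = 1) (m : ℕ) : u ^ (m : ZMod N).val = u ^ m := by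
  rw [ZMod.val_natCast, ← pow_eq_pow_mod m hu]

theorem pow_zmod_val_add [NeZero N] (hu : u ^ N = 1) (a b : ZMod N) :
    u ^ (a + b).val = u ^ a.val * u ^ b.val := by
  rw [← pow_add, ← pow_zmod_val_natCast hu (a.val + b.val), Nat.cast_add, ZMod.natCast_zmod_val,
    ZMod.natCast_zmod_val]

end RootOfUnityPowers

theorem IsPrimitiveRoot.pow_zmod_val_injective {R : Type*} [CommMonoid R] {ζ : R} {N : ℕ}
    [NeZero N] (h : IsPrimitiveRoot ζ N) : Function.Injective fun a : ZMod N => ζ ^ a.val :=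
  fun a b hab => ZMod.val_injective N (h.pow_inj (ZMod.val_lt a) (ZMod.val_lt b) hab)

theorem Subspace.natCard_mul_natCard_dualAnnihilator {K V : Type*} [Field K] [AddCommGroup V]
    [Module K V] [FiniteDimensional K V] (W : Subspace K V) :
    Nat.card W * Nat.card W.dualAnnihilator = Nat.card V := by
  rw [Module.natCard_eq_pow_finrank (K := K) (V := W),
    Module.natCard_eq_pow_finrank (K := K) (V := W.dualAnnihilator),
    Module.natCard_eq_pow_finrank (K := K) (V := V), ← pow_add,
    Subspace.finrank_add_finrank_dualAnnihilator_eq]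

theorem Complex.mem_one_neg_one_I_neg_I_of_pow_four_eq_one {c : ℂ} (h : c ^ 4 = 1) :
    c ∈ ({1, -1, Complex.I, -Complex.I} : Set ℂ) := by
  have hfactor : (c - 1) * (c + 1) * ((c - Complex.I) * (c + Complex.I)) = 0 := by
    linear_combination (exp := 1) h - (c ^ 2 - 1) * Complex.I_sq
  simp only [Set.mem_insert_iff, Set.mem_singleton_iff, mul_eq_zero, sub_eq_zero,
    add_eq_zero_iff_eq_neg] at hfactor ⊢
  tauto

theorem norm_eq_one_div_sqrt_ncard_support {α E : Type*} [Fintype α] [NormedAddCommGroup E]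
    (f : α → E) (hsum : ∑ a, ‖f a‖ ^ 2 = 1)
    (hnorm : ∀ a a', f a ≠ 0 → f a' ≠ 0 → ‖f a‖ = ‖f a'‖) (a : α) (ha : f a ≠ 0) :
    ‖f a‖ = 1 / Real.sqrt {x | f x ≠ 0}.ncard := by
  classical
  set s := Finset.univ.filter (f · ≠ 0)
  have hs : {x | f x ≠ 0}.ncard = s.card := by
    rw [← Set.ncard_coe_finset]
    congr 1
    ext
    simp [s]
  have hcard : (s.card : ℝ) * ‖f a‖ ^ 2 = 1 := calc
    (s.card : ℝ) * ‖f a‖ ^ 2 = ∑ x ∈ s, ‖f x‖ ^ 2 := by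
      rw [Finset.sum_congr rfl fun x hx => by rw [hnorm x a (Finset.mem_filter.1 hx).2 ha],
        Finset.sum_const, nsmul_eq_mul]
    _ = ∑ x, ‖f x‖ ^ 2 :=
      Finset.sum_filter_of_ne fun x _ hx h0 => hx (by rw [h0, norm_zero, sq, zero_mul])
    _ = 1 := hsum
  rw [hs, ← Real.sqrt_sq (norm_nonneg (f a)), eq_one_div_of_mul_eq_one_right hcard,
    Real.sqrt_div' _ (Nat.cast_nonneg _), Real.sqrt_one]

section Stabilizer

variable {n : ℕ}

theorem pauliFun_apply (k : ZMod 4) (x z : Fin n → ZMod 2) (φ : QState n)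
    (b : Fin n → ZMod 2) :
    pauliFun n k x z φ b = Complex.I ^ k.val * (-1) ^ (z ⬝ᵥ (b + x)).val * φ (b + x) := by
  have hdot : z ⬝ᵥ (b + x) = ((∑ i, (z i * (b i + x i)).val : ℕ) : ZMod 2) := by
    push_cast [ZMod.natCast_val, ZMod.cast_id]
    rfl
  rw [pauliFun, hdot, pow_zmod_val_natCast neg_one_sq]

theorem pauliFun_pauliFun (k₁ k₂ : ZMod 4) (x₁ x₂ z₁ z₂ : Fin n → ZMod 2) (φ : QState n) :
    pauliFun n k₁ x₁ z₁ (pauliFun n k₂ x₂ z₂ φ) =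
      pauliFun n (k₁ + k₂ + ((2 * (z₁ ⬝ᵥ x₂).val : ℕ) : ZMod 4)) (x₁ + x₂) (z₁ + z₂) φ := by
  funext b
  have hb : b + x₁ = b + (x₁ + x₂) + x₂ := by
    rw [add_assoc, add_assoc, ZModModule.add_self, add_zero]
  rw [pauliFun_apply, pauliFun_apply, pauliFun_apply, add_assoc b x₁ x₂, hb,
    pow_zmod_val_add Complex.I_pow_four, pow_zmod_val_add Complex.I_pow_four,
    pow_zmod_val_natCast Complex.I_pow_four, pow_mul, Complex.I_sq, add_dotProduct,
    dotProduct_add z₁, pow_zmod_val_add neg_one_sq, pow_zmod_val_add neg_one_sq]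
  ring

theorem apply_eq_of_pauliFun_eq {k : ZMod 4} {x z : Fin n → ZMod 2} {ψ : QState n}
    (h : pauliFun n k x z ψ = ψ) (b : Fin n → ZMod 2) :
    ψ b = Complex.I ^ k.val * (-1) ^ (z ⬝ᵥ (b + x)).val * ψ (b + x) :=
  (congrFun h b).symm.trans (pauliFun_apply k x z ψ b)

open Classical in
def stabLabels (ψ : QState n) : Finset (ZMod 4 × (Fin n → ZMod 2) × (Fin n → ZMod 2)) :=
  {p | pauliFun n p.1 p.2.1 p.2.2 ψ = ψ}

theorem mem_stabLabels {ψ : QState n} {p : ZMod 4 × (Fin n → ZMod 2) × (Fin n → ZMod 2)} :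
    p ∈ stabLabels ψ ↔ pauliFun n p.1 p.2.1 p.2.2 ψ = ψ := by
  simp [stabLabels]

theorem ncard_stabGroup_le (ψ : QState n) : (stabGroup n ψ).ncard ≤ (stabLabels ψ).card := by
  have himage : stabGroup n ψ =
      (fun p : ZMod 4 × _ × _ => pauliFun n p.1 p.2.1 p.2.2) '' (stabLabels ψ : Set _) := by
    ext U
    simp only [stabGroup, PauliGroup, Set.mem_ofPred_eq, Set.mem_image, Finset.mem_coe,
      mem_stabLabels, Prod.exists]
    constructor
    · rintro ⟨⟨k, x, z, rfl⟩, h⟩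
      exact ⟨k, x, z, h, rfl⟩
    · rintro ⟨k, x, z, h, rfl⟩
      exact ⟨⟨k, x, z, rfl⟩, h⟩
  rw [himage, ← Set.ncard_coe_finset]
  exact Set.ncard_image_le (Finset.finite_toSet _)

def supportSpan (ψ : QState n) : Submodule (ZMod 2) (Fin n → ZMod 2) :=
  Submodule.span (ZMod 2) {v | ∃ b b', ψ b ≠ 0 ∧ ψ b' ≠ 0 ∧ b + b' = v}

theorem add_mem_supportSpan {ψ : QState n} {b b' : Fin n → ZMod 2} (hb : ψ b ≠ 0)
    (hb' : ψ b' ≠ 0) : b + b' ∈ supportSpan ψ :=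
  Submodule.subset_span ⟨b, b', hb, hb', rfl⟩

theorem mem_supportSpan_of_pauliFun_eq {ψ : QState n} {k : ZMod 4} {x z b : Fin n → ZMod 2}
    (hb : ψ b ≠ 0) (h : pauliFun n k x z ψ = ψ) : x ∈ supportSpan ψ := by
  have hbx : ψ (b + x) ≠ 0 := by
    intro h0
    apply hb
    rw [apply_eq_of_pauliFun_eq h b, h0, mul_zero]
  simpa [← add_assoc, ZModModule.add_self] using add_mem_supportSpan hb hbx

theorem phase_eq_one_of_pauliFun_zero_eq {ψ : QState n} {k : ZMod 4} {z b : Fin n → ZMod 2}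
    (h : pauliFun n k 0 z ψ = ψ) (hb : ψ b ≠ 0) :
    Complex.I ^ k.val * (-1) ^ (z ⬝ᵥ b).val = 1 := by
  have hrel := apply_eq_of_pauliFun_eq h b
  rw [add_zero] at hrel
  exact (mul_eq_right₀ hb).1 hrel.symm

theorem dotProductEquiv_mem_dualAnnihilator {ψ : QState n} {k : ZMod 4}
    {z : Fin n → ZMod 2} (h : pauliFun n k 0 z ψ = ψ) :
    dotProductEquiv (ZMod 2) (Fin n) z ∈ (supportSpan ψ).dualAnnihilator := by
  suffices supportSpan ψ ≤ LinearMap.ker (dotProductEquiv (ZMod 2) (Fin n) z) from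
    (Submodule.mem_dualAnnihilator _).2 fun v hv => this hv
  refine Submodule.span_le.2 ?_
  rintro _ ⟨b, b', hb, hb', rfl⟩
  have hsign : z ⬝ᵥ b = z ⬝ᵥ b' :=
    (IsPrimitiveRoot.neg_one 0 two_ne_zero.symm).pow_zmod_val_injective <| mul_left_cancel₀
      (pow_ne_zero _ Complex.I_ne_zero)
      ((phase_eq_one_of_pauliFun_zero_eq h hb).trans
        (phase_eq_one_of_pauliFun_zero_eq h hb').symm)
  simp [dotProduct_add, hsign, ZModModule.add_self]

theorem card_stabLabels_xPart_zero_le {ψ : QState n} {b : Fin n → ZMod 2} (hb : ψ b ≠ 0) :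
    ((stabLabels ψ).filter (·.2.1 = 0)).card ≤ Nat.card (supportSpan ψ).dualAnnihilator := by
  have : Finite (Module.Dual (ZMod 2) (Fin n → ZMod 2)) := Module.finite_of_finite (ZMod 2)
  rw [← Set.ncard_coe_finset, ← SetLike.coe_sort_coe, Nat.card_coe_set_eq]
  refine Set.ncard_le_ncard_of_injOn (fun p => dotProductEquiv (ZMod 2) (Fin n) p.2.2) ?_ ?_
  · rintro ⟨k, x, z⟩ hp
    simp only [Finset.coe_filter, Set.mem_ofPred_eq, mem_stabLabels] at hp
    obtain ⟨h, rfl⟩ := hp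
    exact dotProductEquiv_mem_dualAnnihilator h
  · rintro ⟨k, x, z⟩ hp ⟨k', x', z'⟩ hp' hzz'
    simp only [Finset.coe_filter, Set.mem_ofPred_eq, mem_stabLabels] at hp hp'
    obtain ⟨h, rfl⟩ := hp
    obtain ⟨h', rfl⟩ := hp'
    obtain rfl : z = z' := (dotProductEquiv (ZMod 2) (Fin n)).injective hzz'
    obtain rfl : k = k' := Complex.isPrimitiveRoot_I.pow_zmod_val_injective <|
      mul_right_cancel₀ (pow_ne_zero _ (neg_ne_zero.2 one_ne_zero))
        ((phase_eq_one_of_pauliFun_zero_eq h hb).trans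
          (phase_eq_one_of_pauliFun_zero_eq h' hb).symm)
    rfl

theorem card_stabLabels_le_mul (ψ : QState n) :
    (stabLabels ψ).card ≤
      ((stabLabels ψ).filter (·.2.1 = 0)).card * ((stabLabels ψ).image (·.2.1)).card := by
  refine Finset.card_le_mul_card_image _ _ fun x hx => ?_
  obtain ⟨⟨k₀, x₀, z₀⟩, hp₀, hx₀ : x₀ = x⟩ := Finset.mem_image.1 hx
  subst x₀
  rw [mem_stabLabels] at hp₀
  -- multiplying by the stabilizer `(k₀, x, z₀)` cancels the `X`-part
  refine Finset.card_le_card_of_injOn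
    (fun p => (p.1 + k₀ + ((2 * (p.2.2 ⬝ᵥ x).val : ℕ) : ZMod 4), 0, p.2.2 + z₀)) ?_ ?_
  · rintro ⟨k, x', z⟩ hp
    simp only [Finset.coe_filter, Set.mem_ofPred_eq, mem_stabLabels] at hp
    obtain ⟨h, hx'⟩ := hp
    subst x'
    have hprod := pauliFun_pauliFun k k₀ x x z z₀ ψ
    rw [hp₀, h, ZModModule.add_self] at hprod
    simpa [mem_stabLabels] using hprod.symm
  · rintro ⟨k, x', z⟩ hp ⟨k', x'', z'⟩ hp' heq
    simp only [Finset.coe_filter, Set.mem_ofPred_eq] at hp hp'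
    obtain rfl := hp.2
    obtain rfl := hp'.2
    simp only [Prod.mk.injEq, add_left_inj, true_and] at heq
    obtain ⟨hk, rfl⟩ := heq
    rw [add_left_inj, add_left_inj] at hk
    rw [hk]

theorem exists_pauliFun_eq_of_ne_zero {ψ : QState n} (hcard : (stabGroup n ψ).ncard = 2 ^ n)
    {b b' : Fin n → ZMod 2} (hb : ψ b ≠ 0) (hb' : ψ b' ≠ 0) :
    ∃ k z, pauliFun n k (b + b') z ψ = ψ := by
  have : Finite (Module.Dual (ZMod 2) (Fin n → ZMod 2)) := Module.finite_of_finite (ZMod 2)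
  set V := (stabLabels ψ).image (·.2.1)
  set A := (supportSpan ψ).dualAnnihilator
  have hVL : (V : Set (Fin n → ZMod 2)) ⊆ supportSpan ψ := by
    simp only [V, Finset.coe_image, Set.image_subset_iff]
    rintro ⟨k, x, z⟩ hp
    exact mem_supportSpan_of_pauliFun_eq hb (mem_stabLabels.1 hp)
  have hcount : Nat.card (supportSpan ψ) * Nat.card A ≤ V.card * Nat.card A := calc
    _ = 2 ^ n := by rw [Subspace.natCard_mul_natCard_dualAnnihilator]; simp
    _ = (stabGroup n ψ).ncard := hcard.symm
    _ ≤ (stabLabels ψ).card := ncard_stabGroup_le ψ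
    _ ≤ _ * V.card := card_stabLabels_le_mul ψ
    _ ≤ Nat.card A * V.card := Nat.mul_le_mul_right _ (card_stabLabels_xPart_zero_le hb)
    _ = V.card * Nat.card A := mul_comm _ _
  have hVeq : (V : Set (Fin n → ZMod 2)) = supportSpan ψ := by
    refine Set.eq_of_subset_of_ncard_le hVL ?_
    rw [Set.ncard_coe_finset, ← Nat.card_coe_set_eq]
    exact Nat.le_of_mul_le_mul_right hcount Nat.card_pos
  have hmem : b + b' ∈ (V : Set _) := hVeq ▸ add_mem_supportSpan hb hb'
  obtain ⟨⟨k, x, z⟩, hp, rfl⟩ := Finset.mem_image.1 hmem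
  exact ⟨k, z, mem_stabLabels.1 hp⟩

theorem amplitude_div_pow_four_eq_one {ψ : QState n} (hcard : (stabGroup n ψ).ncard = 2 ^ n)
    {b b' : Fin n → ZMod 2} (hb : ψ b ≠ 0) (hb' : ψ b' ≠ 0) : (ψ b / ψ b') ^ 4 = 1 := by
  obtain ⟨k, z, h⟩ := exists_pauliFun_eq_of_ne_zero hcard hb' hb
  have hrel := apply_eq_of_pauliFun_eq h b'
  rw [← add_assoc, ZModModule.add_self, zero_add] at hrel
  have hphase : (Complex.I ^ k.val * (-1) ^ (z ⬝ᵥ b).val) ^ 4 = 1 := by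
    rw [mul_pow, ← pow_mul, ← pow_mul, mul_comm _ 4, mul_comm _ 4, pow_mul, pow_mul,
      Complex.I_pow_four]
    norm_num
  rw [hrel, div_pow, mul_pow, hphase, one_mul, div_self (pow_ne_zero 4 hb)]

theorem qInner_self (ψ : QState n) : qInner ψ ψ = ((∑ b, ‖ψ b‖ ^ 2 : ℝ) : ℂ) := by
  simp [qInner, Complex.conj_mul']

end Stabilizer

/-- Stabilizer states are unbiased: every nonzero amplitude has modulus
`1/√|s|` where `|s|` is the support size, and the ratio of any two nonzero
amplitudes lies in `{1, -1, i, -i}` (so, normalizing the first nonzero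
amplitude to `1`, all nonzero amplitudes lie in `{±1, ±i}`). -/
theorem stabilizer_amplitudes (n : ℕ) (ψ : QState n)
    (hψ : IsStabilizerState n ψ) :
    (∀ b : Fin n → ZMod 2, ψ b ≠ 0 →
      ‖ψ b‖ = 1 / Real.sqrt ({x | ψ x ≠ 0}.ncard)) ∧
    (∀ b b' : Fin n → ZMod 2, ψ b ≠ 0 → ψ b' ≠ 0 →
      ψ b / ψ b' ∈ ({1, -1, Complex.I, -Complex.I} : Set ℂ)) := by
  obtain ⟨hunit, hcard⟩ := hψ
  refine ⟨norm_eq_one_div_sqrt_ncard_support ψ ?_ ?_, fun b b' hb hb' =>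
    Complex.mem_one_neg_one_I_neg_I_of_pow_four_eq_one (amplitude_div_pow_four_eq_one hcard hb hb')⟩
  · exact_mod_cast (qInner_self ψ).symm.trans hunit
  · intro b b' hb hb'
    have hratio :=
      Complex.norm_eq_one_of_pow_eq_one (amplitude_div_pow_four_eq_one hcard hb hb') four_ne_zero
    rwa [norm_div, div_eq_one_iff_eq (norm_ne_zero_iff.2 hb')] at hratio
end
end

section
/- Fix m ≥ 0 and define a_{n,k} = L_n(k)/N(n), the fraction of stabilizer states at k-neighbor distance from a fixed stabilizer state. Then the sequence {a_{n,n−m}} is monotone in n (increasing for m > 0, decreasing for m = 0) and convergent as n → ∞. -/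
open scoped BigOperators

noncomputable section

/-- The number of `k`-neighbors of an `n`-qubit stabilizer state. -/
def Lcount (n k : ℕ) : ℝ :=
  2 ^ ((k : ℤ) * ((k : ℤ) + 1 - (n : ℤ))) *
    ∏ j ∈ Finset.range k, (((4 : ℝ) ^ n / 2 ^ j - 2 ^ n) / (2 ^ k - 2 ^ j))

/-- The total number of `n`-qubit stabilizer states. -/
def Ncount (n : ℕ) : ℝ := 2 ^ n * ∏ k ∈ Finset.range n, ((2 : ℝ) ^ (n - k) + 1)

/-- The fraction of stabilizer states that are `k`-neighbors of a fixed one. -/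
def aSeq (n k : ℕ) : ℝ := Lcount n k / Ncount n

/-!
Shifting `(n, k)` to `(n + 1, k + 1)` multiplies `a_{n,k}` by
`r = 2^{k+1} (2^{n+1} - 1) / ((2^{k+1} - 1) (2^{n+1} + 1))`, and the numerator minus the denominator
of `r` is `2^{n+1} + 1 - 2^{k+2}`. Hence `r > 1` for `k < n`, `r < 1` for `k = n`, and always
`r ≤ 1 + 2^{-k}`. Along `k = n - m` the sequence is thus antitone and positive for `m = 0`, and
monotone for `m > 0`, bounded by its first term times `∏ (1 + 2^{-k}) ≤ exp (∑ 2^{-k}) = e²`.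
-/

open Finset Real

theorem bddAbove_range_of_le_mul_one_add {u ε : ℕ → ℝ} (hu : 0 ≤ u 0) (hε : ∀ t, 0 ≤ ε t)
    (hs : Summable ε) (h : ∀ t, u (t + 1) ≤ u t * (1 + ε t)) : BddAbove (Set.range u) := by
  have hprod : ∀ t, u t ≤ u 0 * ∏ i ∈ range t, (1 + ε i) := by
    intro t
    induction t with
    | zero => simp
    | succ t ih =>
      rw [prod_range_succ, ← mul_assoc]
      exact (h t).trans (mul_le_mul_of_nonneg_right ih (by linarith [hε t]))
  refine ⟨u 0 * exp (∑' i, ε i), ?_⟩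
  rintro _ ⟨t, rfl⟩
  calc u t ≤ u 0 * ∏ i ∈ range t, (1 + ε i) := hprod t
    _ ≤ u 0 * exp (∑ i ∈ range t, ε i) :=
      mul_le_mul_of_nonneg_left (prod_one_add_le_exp_sum _ hε) hu
    _ ≤ u 0 * exp (∑' i, ε i) := by
      gcongr
      exact hs.sum_le_tsum _ fun i _ => hε i

lemma Ncount_pos (n : ℕ) : 0 < Ncount n :=
  mul_pos (by positivity) (prod_pos fun _ _ => by positivity)

lemma Lcount_pos {n k : ℕ} (hk : k ≤ n) : 0 < Lcount n k := by
  refine mul_pos (zpow_pos two_pos _) (prod_pos fun j hj => div_pos ?_ ?_)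
  · rw [sub_pos, lt_div_iff₀ (by positivity), ← pow_add, show (4 : ℝ) ^ n = 2 ^ (n + n) by
      rw [pow_add, ← mul_pow]; norm_num]
    exact pow_lt_pow_right₀ one_lt_two (by grind)
  · exact sub_pos.2 (pow_lt_pow_right₀ one_lt_two (mem_range.1 hj))

lemma aSeq_pos {n k : ℕ} (hk : k ≤ n) : 0 < aSeq n k :=
  div_pos (Lcount_pos hk) (Ncount_pos n)

lemma Ncount_succ (n : ℕ) : Ncount (n + 1) = 2 * (2 ^ (n + 1) + 1) * Ncount n := by
  simp only [Ncount, prod_range_succ', Nat.succ_sub_succ, Nat.sub_zero]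
  ring

lemma Lcount_succ_succ (n k : ℕ) :
    Lcount (n + 1) (k + 1) = Lcount n k * 2 ^ ((k : ℤ) + 1 - n) *
      ((4 ^ (n + 1) - 2 ^ (n + 1)) / (2 ^ (k + 1) - 1)) := by
  have hfactor : ∀ j ∈ range k,
      ((4 : ℝ) ^ (n + 1) / 2 ^ (j + 1) - 2 ^ (n + 1)) / (2 ^ (k + 1) - 2 ^ (j + 1)) =
        ((4 : ℝ) ^ n / 2 ^ j - 2 ^ n) / (2 ^ k - 2 ^ j) := by
    intro j _
    rw [← mul_div_mul_left _ (2 ^ k - 2 ^ j) (two_ne_zero (α := ℝ))]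
    congr 1 <;> field_simp <;> ring
  have hexp : ((k + 1 : ℕ) : ℤ) * ((k + 1 : ℕ) + 1 - (n + 1 : ℕ)) =
      (k : ℤ) * (k + 1 - n) + (k + 1 - n) := by push_cast; ring
  rw [Lcount, prod_range_succ', prod_congr rfl hfactor, hexp, zpow_add₀ two_ne_zero, Lcount]
  ring

lemma aSeq_succ_succ_mul (n k : ℕ) :
    aSeq (n + 1) (k + 1) * ((2 ^ (k + 1) - 1) * (2 ^ (n + 1) + 1)) =
      aSeq n k * (2 ^ (k + 1) * (2 ^ (n + 1) - 1)) := by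
  have hzpow : (2 : ℝ) ^ ((k : ℤ) + 1 - n) = 2 ^ (k + 2) / 2 ^ (n + 1) := by
    rw [← zpow_natCast, ← zpow_natCast, ← zpow_sub₀ two_ne_zero]
    push_cast; ring_nf
  have hk : (2 : ℝ) ^ (k + 1) - 1 ≠ 0 := (sub_pos.2 (one_lt_pow₀ one_lt_two k.succ_ne_zero)).ne'
  have hN := (Ncount_pos n).ne'
  rw [aSeq, aSeq, Lcount_succ_succ, Ncount_succ, hzpow,
    show (4 : ℝ) ^ (n + 1) = 2 ^ (n + 1) * 2 ^ (n + 1) by rw [← mul_pow]; norm_num]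
  field_simp
  ring

lemma aSeq_lt_aSeq_succ_succ {n k : ℕ} (h : k < n) : aSeq n k < aSeq (n + 1) (k + 1) := by
  have hpow : 2 * (2 : ℝ) ^ (k + 1) ≤ 2 ^ (n + 1) := by
    rw [← pow_succ']; exact pow_le_pow_right₀ one_le_two (by omega)
  have hratio : ((2 : ℝ) ^ (k + 1) - 1) * (2 ^ (n + 1) + 1) < 2 ^ (k + 1) * (2 ^ (n + 1) - 1) := by
    linarith
  have hD : (0 : ℝ) < (2 ^ (k + 1) - 1) * (2 ^ (n + 1) + 1) :=
    mul_pos (sub_pos.2 (one_lt_pow₀ one_lt_two k.succ_ne_zero)) (by positivity)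
  refine lt_of_mul_lt_mul_right ?_ hD.le
  rw [aSeq_succ_succ_mul]
  exact mul_lt_mul_of_pos_left hratio (aSeq_pos h.le)

lemma aSeq_succ_succ_lt (n : ℕ) : aSeq (n + 1) (n + 1) < aSeq n n := by
  have hpow : (1 : ℝ) < 2 ^ (n + 1) := one_lt_pow₀ one_lt_two n.succ_ne_zero
  have hratio : (2 : ℝ) ^ (n + 1) * (2 ^ (n + 1) - 1) < (2 ^ (n + 1) - 1) * (2 ^ (n + 1) + 1) := by
    nlinarith
  refine lt_of_mul_lt_mul_right ?_ (by positivity : (0 : ℝ) ≤ (2 ^ (n + 1) - 1) * (2 ^ (n + 1) + 1))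
  rw [aSeq_succ_succ_mul]
  exact mul_lt_mul_of_pos_left hratio (aSeq_pos le_rfl)

lemma aSeq_succ_succ_le {n k : ℕ} (hk : k ≤ n) :
    aSeq (n + 1) (k + 1) ≤ aSeq n k * (1 + (1 / 2) ^ k) := by
  have hpow : (1 : ℝ) ≤ 2 ^ k := one_le_pow₀ one_le_two
  have hD : (0 : ℝ) < (2 ^ (k + 1) - 1) * (2 ^ (n + 1) + 1) :=
    mul_pos (sub_pos.2 (one_lt_pow₀ one_lt_two k.succ_ne_zero)) (by positivity)
  have hhalf : (1 / 2 : ℝ) ^ k * 2 ^ k = 1 := by rw [← mul_pow]; norm_num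
  have hhalf_le : (1 / 2 : ℝ) ^ k ≤ 1 := pow_le_one₀ (by norm_num) (by norm_num)
  have hratio : (2 : ℝ) ^ (k + 1) * (2 ^ (n + 1) - 1) ≤
      (1 + (1 / 2) ^ k) * ((2 ^ (k + 1) - 1) * (2 ^ (n + 1) + 1)) := by
    rw [pow_succ, pow_succ]
    nlinarith [pow_pos (two_pos (α := ℝ)) n]
  refine le_of_mul_le_mul_right ?_ hD
  rw [aSeq_succ_succ_mul, mul_assoc]
  exact mul_le_mul_of_nonneg_left hratio (aSeq_pos hk).le

/-- For fixed `m`, the sequence `a_{n, n-m}` is monotone in `n` (increasing for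
`m > 0`, decreasing for `m = 0`) and convergent as `n → ∞`. -/
theorem aSeq_monotone_convergent (m : ℕ) :
    (∀ n : ℕ, m + 1 ≤ n →
      (0 < m → aSeq n (n - m) < aSeq (n + 1) (n + 1 - m)) ∧
      (m = 0 → aSeq (n + 1) (n + 1) < aSeq n n)) ∧
    ∃ c : ℝ, Filter.Tendsto (fun n : ℕ => aSeq n (n - m)) Filter.atTop (nhds c) := by
  refine ⟨fun n hn => ⟨fun _ => ?_, fun _ => aSeq_succ_succ_lt n⟩, ?_⟩
  · rw [show n + 1 - m = n - m + 1 by omega]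
    exact aSeq_lt_aSeq_succ_succ (by omega)
  suffices ∃ c, Filter.Tendsto (fun t => aSeq (t + m) t) Filter.atTop (nhds c) by
    obtain ⟨c, hc⟩ := this
    exact ⟨c, (Filter.tendsto_add_atTop_iff_nat m).1 (by simpa only [Nat.add_sub_cancel] using hc)⟩
  have hshift : ∀ t, t + 1 + m = t + m + 1 := fun t => Nat.add_right_comm t 1 m
  rcases Nat.eq_zero_or_pos m with rfl | hm
  · exact ⟨_, tendsto_atTop_ciInf (antitone_nat_of_succ_le fun t => (aSeq_succ_succ_lt t).le)
      ⟨0, by rintro _ ⟨t, rfl⟩; exact (aSeq_pos le_rfl).le⟩⟩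
  · refine ⟨_, tendsto_atTop_ciSup (monotone_nat_of_le_succ fun t => ?_) ?_⟩
    · rw [hshift]
      exact (aSeq_lt_aSeq_succ_succ (by omega)).le
    · refine bddAbove_range_of_le_mul_one_add (aSeq_pos (by omega)).le (fun t => by positivity)
        summable_geometric_two fun t => ?_
      rw [hshift]
      exact aSeq_succ_succ_le (by omega)
end
end

section
/- For each qubit pair (q,r) of an n-qubit stabilizer state, the nonzero double cofactors |ψ_{qr=ab}⟩ (a,b ∈ {0,1}) all have equal support and equal norm; in particular, the number of nonzero double cofactors cannot be exactly three. -/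
/-!
If a Pauli operator `i^k X(x) Z(z)` fixes `ψ`, then `ψ (c + x) = i^k (-1)^(z ⬝ᵥ c) ψ c`: the
modulus of `ψ` is invariant under translation by `x`, and `x` lies in `D = supp ψ - u` for any
`u ∈ supp ψ`. Two stabilizers with the same `X`-part have `Z`-parts differing by a vector of
`D^⊥`, and `k` is determined by `z`. Hence `2^n ≤ #{X-parts} · |D^⊥| ≤ |D| · |D^⊥| ≤ 2^n`, so
every element of `D` is the `X`-part of a stabilizer. Translating by the `X`-part `x₁ + x₂` carries
any nonzero double cofactor onto any other preserving `|ψ|`, and shows that the labels of the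
nonzero double cofactors form an affine subset of `𝔽₂²`, which cannot have three elements.
-/

open scoped BigOperators

noncomputable section

/-- The double cofactor of a state with respect to qubits `q, r` and bit values
`a, b`: the sub-sum of the state over basis states with `q`-th bit `a` and
`r`-th bit `b`. -/
def dcof {n : ℕ} (ψ : QState n) (q r : Fin n) (a b : ZMod 2) : QState n :=
  fun x => if x q = a ∧ x r = b then ψ x else 0


open Finset Matrix

section DotProductAnnihilator

variable {K ι : Type*} [Field K] [Fintype K] [DecidableEq K] [Fintype ι] [DecidableEq ι]

def dotAnnihilator (D : Finset (ι → K)) : Finset (ι → K) :=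
  {w | ∀ d ∈ D, d ⬝ᵥ w = 0}

lemma mem_dotAnnihilator {D : Finset (ι → K)} {w : ι → K} :
    w ∈ dotAnnihilator D ↔ ∀ d ∈ D, d ⬝ᵥ w = 0 := by
  simp [dotAnnihilator]

theorem card_mul_card_dotAnnihilator_le (D : Finset (ι → K)) :
    #D * #(dotAnnihilator D) ≤ Fintype.card K ^ Fintype.card ι := by
  let B : LinearMap.BilinForm K (ι → K) := dotProductBilin K K
  let W := Submodule.span K (D : Set (ι → K))
  have hB : B.Nondegenerate :=
    ⟨fun v hv => dotProduct_eq_zero v hv,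
     fun w hw => dotProduct_eq_zero w fun v => by rw [dotProduct_comm]; exact hw v⟩
  have hAnn : (dotAnnihilator D : Set (ι → K)) = B.orthogonal W := by
    ext w
    rw [mem_coe, mem_dotAnnihilator, SetLike.mem_coe, LinearMap.BilinForm.mem_orthogonal_iff]
    refine ⟨fun h v hv => ?_, fun h d hd => h d (Submodule.subset_span hd)⟩
    induction hv using Submodule.span_induction with
    | mem d hd => exact h d hd
    | zero => exact zero_dotProduct w
    | add _ _ _ _ h₁ h₂ => rw [map_add, LinearMap.add_apply, h₁, h₂, add_zero]
    | smul c _ _ h₁ => rw [map_smul, LinearMap.smul_apply, h₁, smul_zero]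
  have hD : #D ≤ Nat.card W := by
    rw [← Nat.card_eq_finsetCard]
    exact Nat.card_mono (Set.toFinite _) Submodule.subset_span
  calc #D * #(dotAnnihilator D) ≤ Nat.card W * Nat.card (B.orthogonal W) := by
        rw [← Nat.card_eq_finsetCard (dotAnnihilator D)]
        gcongr
        exact (Nat.card_congr (Equiv.setCongr hAnn)).le
    _ = Nat.card K ^ (Module.finrank K W + Module.finrank K (B.orthogonal W)) := by
        rw [pow_add, ← Module.natCard_eq_pow_finrank, ← Module.natCard_eq_pow_finrank]
    _ = Fintype.card K ^ Fintype.card ι := by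
        rw [LinearMap.BilinForm.finrank_orthogonal hB, Nat.add_sub_cancel' (Submodule.finrank_le W),
          Module.finrank_fintype_fun_eq_card, Nat.card_eq_fintype_card]

end DotProductAnnihilator

theorem Set.ncard_ne_three_of_add_add_mem {G : Type*} [AddCommGroup G] [Module (ZMod 2) G]
    {S : Set G} (hS : ∀ a ∈ S, ∀ b ∈ S, ∀ c ∈ S, a + b + c ∈ S) : S.ncard ≠ 3 := by
  intro h
  obtain ⟨a, b, c, hab, hac, hbc, rfl⟩ := Set.ncard_eq_three.1 h
  have eq_of_add_eq_zero : ∀ x y : G, x + y = 0 → x = y := fun x y h => by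
    rwa [add_eq_zero_iff_eq_neg, ZModModule.neg_eq_self] at h
  obtain h | h | h : a + b + c = a ∨ a + b + c = b ∨ a + b + c = c :=
    hS a (by simp) b (by simp) c (by simp)
  · exact hbc (eq_of_add_eq_zero b c (by rwa [add_assoc, add_eq_left] at h))
  · exact hac (eq_of_add_eq_zero a c (by rwa [add_right_comm, add_eq_right] at h))
  · exact hab (eq_of_add_eq_zero a b (by rwa [add_eq_right] at h))

namespace QState

variable {n : ℕ}

lemma neg_one_pow_val_add (a b : ZMod 2) :
    (-1 : ℂ) ^ (a + b).val = (-1) ^ a.val * (-1) ^ b.val := by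
  rw [ZMod.val_add, ← pow_add, neg_one_pow_eq_pow_mod_two (n := a.val + b.val)]

lemma neg_one_pow_val_injective : Function.Injective fun a : ZMod 2 => (-1 : ℂ) ^ a.val := by
  intro a b h
  fin_cases a <;> fin_cases b <;> first | rfl | norm_num [ZMod.val] at h

lemma neg_one_pow_sum_val {ι : Type*} [Fintype ι] (f : ι → ZMod 2) :
    (-1 : ℂ) ^ (∑ i, (f i).val) = (-1) ^ (∑ i, f i).val := by
  rw [neg_one_pow_eq_pow_mod_two, ← ZMod.val_natCast, Nat.cast_sum]
  simp only [ZMod.natCast_val, ZMod.cast_id', id]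

lemma I_pow_val_injective : Function.Injective fun k : ZMod 4 => Complex.I ^ k.val := by
  intro a b h
  fin_cases a <;> fin_cases b <;> first | rfl | norm_num [ZMod.val, Complex.ext_iff, pow_succ] at h

lemma pauliFun_apply (k : ZMod 4) (x z : Fin n → ZMod 2) (ψ : QState n) (b : Fin n → ZMod 2) :
    pauliFun n k x z ψ b = Complex.I ^ k.val * (-1) ^ (z ⬝ᵥ (b + x)).val * ψ (b + x) := by
  rw [pauliFun, neg_one_pow_sum_val]
  rfl

section Stabilizer

variable {ψ : QState n} {k k' : ZMod 4} {x z z' : Fin n → ZMod 2}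

lemma apply_add_eq_of_pauliFun_eq (h : pauliFun n k x z ψ = ψ) (c : Fin n → ZMod 2) :
    ψ (c + x) = Complex.I ^ k.val * (-1) ^ (z ⬝ᵥ c).val * ψ c := by
  have := congrFun h (c + x)
  rwa [pauliFun_apply, add_assoc, ZModModule.add_self, add_zero, eq_comm] at this

lemma norm_apply_add_eq_of_pauliFun_eq (h : pauliFun n k x z ψ = ψ) (c : Fin n → ZMod 2) :
    ‖ψ (c + x)‖ = ‖ψ c‖ := by
  simp [apply_add_eq_of_pauliFun_eq h c]

lemma phase_eq_of_pauliFun_eq (h : pauliFun n k x z ψ = ψ) (h' : pauliFun n k' x z' ψ = ψ)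
    {c : Fin n → ZMod 2} (hc : ψ c ≠ 0) :
    Complex.I ^ k.val * (-1) ^ (z ⬝ᵥ c).val = Complex.I ^ k'.val * (-1) ^ (z' ⬝ᵥ c).val :=
  mul_right_cancel₀ hc <|
    (apply_add_eq_of_pauliFun_eq h c).symm.trans (apply_add_eq_of_pauliFun_eq h' c)

lemma phase_exponent_eq_of_pauliFun_eq (h : pauliFun n k x z ψ = ψ)
    (h' : pauliFun n k' x z ψ = ψ) {u : Fin n → ZMod 2} (hu : ψ u ≠ 0) : k = k' :=
  I_pow_val_injective <| mul_right_cancel₀ (by simp) (phase_eq_of_pauliFun_eq h h' hu)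

lemma dotProduct_add_eq_zero_of_pauliFun_eq (h : pauliFun n k x z ψ = ψ)
    (h' : pauliFun n k' x z' ψ = ψ) {u d : Fin n → ZMod 2} (hu : ψ u ≠ 0)
    (hd : ψ (u + d) ≠ 0) : d ⬝ᵥ (z + z') = 0 := by
  have hu' := phase_eq_of_pauliFun_eq h h' hu
  have hd' := phase_eq_of_pauliFun_eq h h' hd
  rw [dotProduct_add, dotProduct_add, neg_one_pow_val_add, neg_one_pow_val_add] at hd'
  have hsign : (-1 : ℂ) ^ (z ⬝ᵥ d).val = (-1) ^ (z' ⬝ᵥ d).val :=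
    mul_left_cancel₀ (a := Complex.I ^ k.val * (-1) ^ (z ⬝ᵥ u).val) (by simp) <| by
      linear_combination hd' - (-1 : ℂ) ^ (z' ⬝ᵥ d).val * hu'
  rw [dotProduct_add, dotProduct_comm, dotProduct_comm d z', neg_one_pow_val_injective hsign,
    ZModModule.add_self]

open Classical in
def stabLabels (ψ : QState n) : Finset (ZMod 4 × (Fin n → ZMod 2) × (Fin n → ZMod 2)) :=
  {t | pauliFun n t.1 t.2.1 t.2.2 ψ = ψ}

lemma mem_stabLabels {t : ZMod 4 × (Fin n → ZMod 2) × (Fin n → ZMod 2)} :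
    t ∈ stabLabels ψ ↔ pauliFun n t.1 t.2.1 t.2.2 ψ = ψ := by
  simp [stabLabels]

lemma ncard_stabGroup_le_card_stabLabels : (stabGroup n ψ).ncard ≤ #(stabLabels ψ) := by
  have : stabGroup n ψ =
      (fun t : ZMod 4 × _ × _ => pauliFun n t.1 t.2.1 t.2.2) '' (stabLabels ψ : Set _) := by
    ext U
    simp only [stabGroup, PauliGroup, Set.mem_ofPred_eq, Set.mem_image, mem_coe, mem_stabLabels,
      Prod.exists]
    constructor
    · rintro ⟨⟨k, x, z, rfl⟩, hfix⟩
      exact ⟨k, x, z, hfix, rfl⟩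
    · rintro ⟨k, x, z, hfix, rfl⟩
      exact ⟨⟨k, x, z, rfl⟩, hfix⟩
  rw [this, ← Set.ncard_coe_finset]
  exact Set.ncard_image_le (Finset.finite_toSet _)

def shiftedSupport (ψ : QState n) (u : Fin n → ZMod 2) : Finset (Fin n → ZMod 2) :=
  {d | ψ (u + d) ≠ 0}

lemma mem_shiftedSupport {u d : Fin n → ZMod 2} :
    d ∈ shiftedSupport ψ u ↔ ψ (u + d) ≠ 0 := by
  simp [shiftedSupport]

lemma image_stabLabels_subset_shiftedSupport {u : Fin n → ZMod 2} (hu : ψ u ≠ 0) :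
    (stabLabels ψ).image (·.2.1) ⊆ shiftedSupport ψ u := by
  simp only [subset_iff, mem_image, mem_stabLabels, mem_shiftedSupport]
  rintro _ ⟨⟨k, x, z⟩, hfix, rfl⟩
  rw [apply_add_eq_of_pauliFun_eq hfix]
  simpa using hu

lemma card_filter_stabLabels_le {u : Fin n → ZMod 2} (hu : ψ u ≠ 0) (x : Fin n → ZMod 2) :
    #{t ∈ stabLabels ψ | t.2.1 = x} ≤ #(dotAnnihilator (shiftedSupport ψ u)) := by
  obtain hempty | ⟨⟨k₀, x₀, z₀⟩, ht₀⟩ :=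
    eq_empty_or_nonempty {t ∈ stabLabels ψ | t.2.1 = x}
  · simp [hempty]
  simp only [mem_filter, mem_stabLabels] at ht₀
  obtain ⟨hfix₀, rfl⟩ := ht₀
  refine card_le_card_of_injOn (fun t => t.2.2 + z₀) ?_ ?_
  · rintro ⟨k, x, z⟩ ht
    simp only [coe_filter, mem_stabLabels, Set.mem_ofPred_eq] at ht
    obtain ⟨hfix, rfl⟩ := ht
    simp only [mem_coe, mem_dotAnnihilator, mem_shiftedSupport]
    exact fun d hd => dotProduct_add_eq_zero_of_pauliFun_eq hfix hfix₀ hu hd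
  · rintro ⟨k, x, z⟩ ht ⟨k', x', z'⟩ ht' hz
    simp only [coe_filter, mem_stabLabels, Set.mem_ofPred_eq] at ht ht'
    obtain ⟨hfix, rfl⟩ := ht
    obtain ⟨hfix', rfl⟩ := ht'
    obtain rfl : z = z' := add_right_cancel hz
    rw [phase_exponent_eq_of_pauliFun_eq hfix hfix' hu]

theorem exists_pauliFun_eq_of_apply_ne_zero (hψ : 2 ^ n ≤ (stabGroup n ψ).ncard)
    {u v : Fin n → ZMod 2} (hu : ψ u ≠ 0) (hv : ψ v ≠ 0) :
    ∃ k z, pauliFun n k (u + v) z ψ = ψ := by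
  set D := shiftedSupport ψ u
  set X := (stabLabels ψ).image (·.2.1)
  have hXD : X ⊆ D := image_stabLabels_subset_shiftedSupport hu
  have hcount : 2 ^ n ≤ #(dotAnnihilator D) * #X :=
    (hψ.trans ncard_stabGroup_le_card_stabLabels).trans <|
      card_le_mul_card_image _ _ fun x _ => card_filter_stabLabels_le hu x
  have hdual : #D * #(dotAnnihilator D) ≤ 2 ^ n := by
    simpa using card_mul_card_dotAnnihilator_le D
  have hpos : 0 < #(dotAnnihilator D) :=
    card_pos.2 ⟨0, mem_dotAnnihilator.2 fun d _ => dotProduct_zero d⟩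
  have hXeq : X = D := eq_of_subset_of_card_le hXD <|
    le_of_mul_le_mul_left (by rw [mul_comm]; exact hdual.trans hcount) hpos
  have huv : u + v ∈ X := by
    rw [hXeq, mem_shiftedSupport, ← add_assoc, ZModModule.add_self, zero_add]
    exact hv
  obtain ⟨⟨k, x, z⟩, hfix, rfl⟩ := mem_image.1 huv
  exact ⟨k, z, mem_stabLabels.1 hfix⟩

end Stabilizer

section Translation

variable {f g ψ : QState n} {t : Fin n → ZMod 2}

lemma ncard_support_eq_of_norm_apply_add (h : ∀ x, ‖f (x + t)‖ = ‖g x‖) :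
    {x | f x ≠ 0}.ncard = {x | g x ≠ 0}.ncard := by
  have hpre : {x | g x ≠ 0} = (· + t) ⁻¹' {x | f x ≠ 0} := by
    ext x
    rw [Set.mem_preimage, Set.mem_ofPred_eq, Set.mem_ofPred_eq, ← norm_ne_zero_iff, ← h,
      norm_ne_zero_iff]
  rw [hpre, Set.ncard_preimage_of_injective_subset_range (add_left_injective t)
    fun y _ => ⟨y + t, by simp only [add_assoc, ZModModule.add_self, add_zero]⟩]

lemma qInner_self_eq_of_norm_apply_add (h : ∀ x, ‖f (x + t)‖ = ‖g x‖) :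
    qInner f f = qInner g g := by
  simp only [qInner, Complex.conj_mul']
  exact (Fintype.sum_equiv (Equiv.addRight t) _ _ fun x => by simp [h]).symm

lemma norm_dcof_add (ht : ∀ c, ‖ψ (c + t)‖ = ‖ψ c‖) (q r : Fin n) (a b : ZMod 2)
    (x : Fin n → ZMod 2) :
    ‖dcof ψ q r (a + t q) (b + t r) (x + t)‖ = ‖dcof ψ q r a b x‖ := by
  simp only [dcof, Pi.add_apply, add_left_inj]
  split_ifs <;> simp [ht]

lemma dcof_add_ne_zero (ht : ∀ c, ‖ψ (c + t)‖ = ‖ψ c‖) {q r : Fin n} {a b : ZMod 2}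
    (h : dcof ψ q r a b ≠ 0) : dcof ψ q r (a + t q) (b + t r) ≠ 0 := by
  obtain ⟨x, hx⟩ := Function.ne_iff.1 h
  refine Function.ne_iff.2 ⟨x + t, ?_⟩
  rw [Pi.zero_apply, ← norm_ne_zero_iff, norm_dcof_add ht, norm_ne_zero_iff]
  exact hx

end Translation

theorem exists_norm_translation_of_dcof_ne_zero {ψ : QState n} (hψ : IsStabilizerState n ψ)
    {q r : Fin n} {a b a' b' : ZMod 2} (h : dcof ψ q r a b ≠ 0) (h' : dcof ψ q r a' b' ≠ 0) :
    ∃ t : Fin n → ZMod 2, (∀ c, ‖ψ (c + t)‖ = ‖ψ c‖) ∧ t q = a + a' ∧ t r = b + b' := by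
  obtain ⟨u, hu⟩ := Function.ne_iff.1 h
  obtain ⟨v, hv⟩ := Function.ne_iff.1 h'
  simp only [dcof, Pi.zero_apply, ne_eq, ite_eq_right_iff, Classical.not_imp] at hu hv
  obtain ⟨⟨rfl, rfl⟩, hu⟩ := hu
  obtain ⟨⟨rfl, rfl⟩, hv⟩ := hv
  obtain ⟨k, z, hfix⟩ := exists_pauliFun_eq_of_apply_ne_zero hψ.2.ge hu hv
  exact ⟨u + v, norm_apply_add_eq_of_pauliFun_eq hfix, rfl, rfl⟩

end QState

open QState in
theorem double_cofactors_equal_general (n : ℕ) (ψ : QState n)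
    (hψ : IsStabilizerState n ψ) (q r : Fin n) :
    (∀ a b a' b' : ZMod 2, dcof ψ q r a b ≠ 0 → dcof ψ q r a' b' ≠ 0 →
      {x | dcof ψ q r a b x ≠ 0}.ncard = {x | dcof ψ q r a' b' x ≠ 0}.ncard ∧
      qInner (dcof ψ q r a b) (dcof ψ q r a b) =
        qInner (dcof ψ q r a' b') (dcof ψ q r a' b')) ∧
    {p : ZMod 2 × ZMod 2 | dcof ψ q r p.1 p.2 ≠ 0}.ncard ≠ 3 := by
  refine ⟨fun a b a' b' h h' => ?_, Set.ncard_ne_three_of_add_add_mem ?_⟩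
  · obtain ⟨t, ht, htq, htr⟩ := exists_norm_translation_of_dcof_ne_zero hψ h' h
    have hab : ∀ x, ‖dcof ψ q r a b (x + t)‖ = ‖dcof ψ q r a' b' x‖ := fun x => by
      simpa [htq, htr, ← add_assoc, ZModModule.add_self] using norm_dcof_add ht q r a' b' x
    exact ⟨ncard_support_eq_of_norm_apply_add hab, qInner_self_eq_of_norm_apply_add hab⟩
  · rintro p hp p' hp' p'' hp''
    obtain ⟨t, ht, htq, htr⟩ := exists_norm_translation_of_dcof_ne_zero hψ hp' hp''
    simpa [htq, htr, add_assoc] using dcof_add_ne_zero ht hp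

/-- For a stabilizer state and any pair of qubits, all nonzero double cofactors
have equal support and equal norm; in particular the number of nonzero double
cofactors cannot be exactly three. -/
theorem double_cofactors_equal (n : ℕ) (ψ : QState n)
    (hψ : IsStabilizerState n ψ) (q r : Fin n) (hqr : q ≠ r) :
    (∀ a b a' b' : ZMod 2, dcof ψ q r a b ≠ 0 → dcof ψ q r a' b' ≠ 0 →
      {x | dcof ψ q r a b x ≠ 0}.ncard = {x | dcof ψ q r a' b' x ≠ 0}.ncard ∧
      qInner (dcof ψ q r a b) (dcof ψ q r a b) =
        qInner (dcof ψ q r a' b') (dcof ψ q r a' b')) ∧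
    {p : ZMod 2 × ZMod 2 | dcof ψ q r p.1 p.2 ≠ 0}.ncard ≠ 3 :=
  double_cofactors_equal_general n ψ hψ q r
end
end
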